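/- arXiv:1510.00839 — 3 statements merged into one kernel-verified Lean document; each statement's English description precedes it below -/
import Mathlib

section
/- Let X be a d-complex, σ ∈ X a face, and 0 ≤ k ≤ d − |σ|. Then for every A ⊆ X_σ(k) (a k-cochain of the link X_σ): ‖I^σ(A)‖ = binom(|σ|+k+1, k+1) · w(σ) · ‖A‖_σ. -/
open Finset
open scoped symmDiff

noncomputable section

namespace HDExpansion

/-- The faces of cardinality `m` (i.e. of dimension `m - 1`) of a complex `X`. -/
def facesC (X : Finset (Finset ℕ)) (m : ℕ) : Finset (Finset ℕ) :=
  X.filter fun σ => σ.card = m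

/-- `X` is a finite, pure, `d`-dimensional abstract simplicial complex:
it is nonempty, closed under subsets, and every face is contained in a face
of cardinality `d + 1`. -/
def IsComplex (X : Finset (Finset ℕ)) (d : ℕ) : Prop :=
  X.Nonempty ∧ (∀ σ ∈ X, ∀ τ ⊆ σ, τ ∈ X) ∧
    ∀ σ ∈ X, ∃ F ∈ X, σ ⊆ F ∧ F.card = d + 1

/-- The weight of a face `σ` in the `d`-complex `X`:
`w(σ) = |{F ∈ X(d) : σ ⊆ F}| / (binom(d+1,|σ|)·|X(d)|)`. -/
def weightC (X : Finset (Finset ℕ)) (d : ℕ) (σ : Finset ℕ) : ℝ :=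
  (((facesC X (d + 1)).filter fun F => σ ⊆ F).card : ℝ) /
    (((d + 1).choose σ.card * (facesC X (d + 1)).card : ℕ) : ℝ)

/-- The norm of a cochain: `‖A‖ = Σ_{σ∈A} w(σ)`. -/
def normC (X : Finset (Finset ℕ)) (d : ℕ) (A : Finset (Finset ℕ)) : ℝ :=
  ∑ σ ∈ A, weightC X d σ

/-- The coboundary map, sending a cochain of faces of cardinality `m`
(dimension `m-1`) to the set of faces of cardinality `m+1` containing an odd
number of its elements. -/
def cobC (X : Finset (Finset ℕ)) (m : ℕ) (A : Finset (Finset ℕ)) : Finset (Finset ℕ) :=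
  (facesC X (m + 1)).filter fun τ => (A.filter fun σ => σ ⊆ τ).card % 2 = 1

/-- `A` (a cochain of faces of cardinality `m`, i.e. dimension `m-1`) is a
coboundary: `A ∈ B^{m-1}`. -/
def IsCobound (X : Finset (Finset ℕ)) (m : ℕ) (A : Finset (Finset ℕ)) : Prop :=
  ∃ γ ⊆ facesC X (m - 1), cobC X (m - 1) γ = A

/-- `A` (a cochain of faces of cardinality `m`, i.e. dimension `m-1`) is a
cocycle: `A ∈ Z^{m-1}`. -/
def IsCocycle (X : Finset (Finset ℕ)) (m : ℕ) (A : Finset (Finset ℕ)) : Prop :=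
  A ⊆ facesC X m ∧ cobC X m A = ∅

/-- `min_{b ∈ B^{m-1}} ‖A + b‖` (cochain sum is symmetric difference `∆`). -/
def distB (X : Finset (Finset ℕ)) (d m : ℕ) (A : Finset (Finset ℕ)) : ℝ :=
  sInf {r : ℝ | ∃ b, IsCobound X m b ∧ r = normC X d (A ∆ b)}

/-- `min_{z ∈ Z^{m-1}} ‖A + z‖` (cochain sum is symmetric difference `∆`). -/
def distZ (X : Finset (Finset ℕ)) (d m : ℕ) (A : Finset (Finset ℕ)) : ℝ :=
  sInf {r : ℝ | ∃ z, IsCocycle X m z ∧ r = normC X d (A ∆ z)}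

/-- The link `X_σ = {τ : σ ∩ τ = ∅, σ ∪ τ ∈ X}`. -/
def link (X : Finset (Finset ℕ)) (σ : Finset ℕ) : Finset (Finset ℕ) :=
  (X.filter fun ρ => σ ⊆ ρ).image fun ρ => ρ \ σ

/-- The localization `I_σ(A) = {τ ∈ X_σ : τ ∪ σ ∈ A}`. -/
def locF (σ : Finset ℕ) (A : Finset (Finset ℕ)) : Finset (Finset ℕ) :=
  (A.filter fun ρ => σ ⊆ ρ).image fun ρ => ρ \ σ

/-- The lifting `I^σ(A) = {τ ∪ σ : τ ∈ A}`. -/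
def liftF (σ : Finset ℕ) (A : Finset (Finset ℕ)) : Finset (Finset ℕ) :=
  A.image fun τ => τ ∪ σ

/-- A cochain of faces of cardinality `m` is minimal if `‖A‖ ≤ ‖A + b‖` for
every coboundary `b`. -/
def IsMinimal (Y : Finset (Finset ℕ)) (dY m : ℕ) (A : Finset (Finset ℕ)) : Prop :=
  ∀ b, IsCobound Y m b → normC Y dY A ≤ normC Y dY (A ∆ b)

/-- A cochain of faces of cardinality `m` is locally minimal if all its
localizations to links of nonempty faces are minimal. -/
def IsLocallyMinimal (X : Finset (Finset ℕ)) (d m : ℕ) (A : Finset (Finset ℕ)) : Prop :=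
  ∀ σ ∈ X, σ ≠ ∅ → IsMinimal (link X σ) (d - σ.card) (m - σ.card) (locF σ A)

/-- `Y` (a `dY`-complex) is a `β`-coboundary expander: for every dimension
`k = m - 1` with `0 ≤ k ≤ dY - 1` and every `k`-cochain `A ∉ B^k`,
`‖δA‖ ≥ β · min_{b ∈ B^k} ‖A+b‖`. -/
def CobExpander (Y : Finset (Finset ℕ)) (dY : ℕ) (β : ℝ) : Prop :=
  ∀ m : ℕ, 1 ≤ m → m ≤ dY → ∀ A ⊆ facesC Y m, ¬ IsCobound Y m A →
    β * distB Y dY m A ≤ normC Y dY (cobC Y m A)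

/-- `E(A,A)`: the edges of `Y` with both vertices in the vertex set `A`
(vertices are identified with singleton faces). -/
def edgesIn (Y : Finset (Finset ℕ)) (A : Finset (Finset ℕ)) : Finset (Finset ℕ) :=
  (facesC Y 2).filter fun e => ∀ v ∈ e, ({v} : Finset ℕ) ∈ A

/-- `Y` (a `dY`-complex) is an `α`-skeleton expander. -/
def SkelExpander (Y : Finset (Finset ℕ)) (dY : ℕ) (α : ℝ) : Prop :=
  ∀ A ⊆ facesC Y 1, normC Y dY (edgesIn Y A) ≤ 4 * (normC Y dY A ^ 2 + α * normC Y dY A)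

/-- The `m`-skeleton of a complex (all faces of dimension at most `m`). -/
def skeleton (X : Finset (Finset ℕ)) (m : ℕ) : Finset (Finset ℕ) :=
  X.filter fun σ => σ.card ≤ m + 1

/-! Faces of the link of `σ` containing `τ` correspond, via `ρ ↦ ρ ∪ σ`, to faces of `X` containing
`τ ∪ σ`. Hence the weight of a lifted face `τ ∪ σ` factors as the weight of `σ` times the weight of
`τ` in the link; the constant `binom(|σ|+k+1, k+1)` compensates for the different binomial
normalisations, through
`binom(d+1, |σ|) · binom(d+1-|σ|, k+1) = binom(d+1, |σ|+k+1) · binom(|σ|+k+1, k+1)`. -/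

lemma mem_link_iff {X : Finset (Finset ℕ)} {σ ρ : Finset ℕ} :
    ρ ∈ link X σ ↔ Disjoint ρ σ ∧ ρ ∪ σ ∈ X := by
  simp only [link, mem_image, mem_filter]
  constructor
  · rintro ⟨F, ⟨hF, hσF⟩, rfl⟩
    exact ⟨sdiff_disjoint, by rwa [sdiff_union_of_subset hσF]⟩
  · rintro ⟨hdisj, hX⟩
    exact ⟨ρ ∪ σ, ⟨hX, subset_union_right⟩, union_sdiff_cancel_right hdisj⟩

lemma card_filter_facesC_link (X : Finset (Finset ℕ)) (σ τ : Finset ℕ) (m : ℕ)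
    (hτ : Disjoint τ σ) :
    ((facesC (link X σ) m).filter (τ ⊆ ·)).card =
      ((facesC X (m + σ.card)).filter (τ ∪ σ ⊆ ·)).card := by
  refine card_nbij' (· ∪ σ) (· \ σ) ?_ ?_ ?_ ?_
  · intro ρ hρ
    simp only [coe_filter, facesC, mem_filter, mem_link_iff, Set.mem_ofPred_eq] at hρ ⊢
    obtain ⟨⟨⟨hdisj, hX⟩, hcard⟩, hτρ⟩ := hρ
    exact ⟨⟨hX, by rw [card_union_of_disjoint hdisj, hcard]⟩, union_subset_union hτρ subset_rfl⟩
  · intro F hF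
    simp only [coe_filter, facesC, mem_filter, mem_link_iff, Set.mem_ofPred_eq] at hF ⊢
    obtain ⟨⟨hX, hcard⟩, hτσF⟩ := hF
    have hσF : σ ⊆ F := subset_union_right.trans hτσF
    refine ⟨⟨⟨sdiff_disjoint, by rwa [sdiff_union_of_subset hσF]⟩, ?_⟩, ?_⟩
    · rw [card_sdiff_of_subset hσF, hcard, Nat.add_sub_cancel]
    · exact subset_sdiff.2 ⟨subset_union_left.trans hτσF, hτ⟩
  · intro ρ hρ
    simp only [coe_filter, facesC, mem_filter, mem_link_iff, Set.mem_ofPred_eq] at hρ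
    exact union_sdiff_cancel_right hρ.1.1.1
  · intro F hF
    simp only [coe_filter, facesC, mem_filter, Set.mem_ofPred_eq] at hF
    exact sdiff_union_of_subset (subset_union_right.trans hF.2)

lemma card_facesC_link (X : Finset (Finset ℕ)) (σ : Finset ℕ) (m : ℕ) :
    (facesC (link X σ) m).card = ((facesC X (m + σ.card)).filter (σ ⊆ ·)).card := by
  simpa using card_filter_facesC_link X σ ∅ m (disjoint_empty_left σ)

lemma choose_mul_choose_sub (n s k : ℕ) :
    n.choose s * (n - s).choose k = n.choose (s + k) * (s + k).choose k := by
  rw [← Nat.choose_symm_add, Nat.choose_mul (Nat.le_add_right s k), Nat.add_sub_cancel_left]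

lemma div_choose_mul_eq_choose_mul_div_mul_div {n s j a N T : ℕ} (hsj : s + j ≤ n)
    (haN : a ≤ N) (hNT : N ≤ T) :
    (a : ℝ) / ((n.choose (s + j) * T : ℕ) : ℝ) =
      ((s + j).choose j : ℝ) * ((N : ℝ) / ((n.choose s * T : ℕ) : ℝ)) *
        ((a : ℝ) / (((n - s).choose j * N : ℕ) : ℝ)) := by
  rcases Nat.eq_zero_or_pos N with rfl | hN
  · -- then `a = 0` too, and both sides are `0` through `0 / _ = 0` and `_ / 0 = 0`
    simp [Nat.le_zero.1 haN]
  have hpos : ∀ {m r : ℕ}, r ≤ m → (m.choose r : ℝ) ≠ 0 := fun h =>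
    Nat.cast_ne_zero.2 (Nat.choose_pos h).ne'
  have hT : (T : ℝ) ≠ 0 := Nat.cast_ne_zero.2 (hN.trans_le hNT).ne'
  have hchoose : (n.choose s : ℝ) * (n - s).choose j = n.choose (s + j) * (s + j).choose j := by
    exact_mod_cast choose_mul_choose_sub n s j
  push_cast
  field_simp [hpos (show s ≤ n by omega), hpos (show j ≤ n - s by omega), hpos hsj, hN.ne']
  linear_combination (a : ℝ) * hchoose

lemma weightC_union_link (X : Finset (Finset ℕ)) (d k : ℕ) (σ τ : Finset ℕ)
    (hk : σ.card + k ≤ d) (hτ : τ ∈ facesC (link X σ) (k + 1)) :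
    weightC X d (τ ∪ σ) =
      ((σ.card + k + 1).choose (k + 1) : ℝ) * weightC X d σ * weightC (link X σ) (d - σ.card) τ := by
  simp only [facesC, mem_filter, mem_link_iff] at hτ
  obtain ⟨⟨hdisj, -⟩, hcard⟩ := hτ
  have hd : d - σ.card + 1 + σ.card = d + 1 := by omega
  have hlift := card_filter_facesC_link X σ τ (d - σ.card + 1) hdisj
  have htop := card_facesC_link X σ (d - σ.card + 1)
  rw [hd] at hlift htop
  rw [weightC, weightC, weightC, hlift, htop, card_union_of_disjoint hdisj, hcard, add_comm (k + 1),
    add_assoc, show d - σ.card + 1 = d + 1 - σ.card by omega]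
  exact div_choose_mul_eq_choose_mul_div_mul_div (by omega)
    (card_le_card (monotone_filter_right _ fun _ _ h => subset_union_right.trans h))
    (card_filter_le _ _)

lemma normC_liftF {X : Finset (Finset ℕ)} {σ : Finset ℕ} (d : ℕ) {A : Finset (Finset ℕ)}
    (hA : A ⊆ link X σ) :
    normC X d (liftF σ A) = ∑ τ ∈ A, weightC X d (τ ∪ σ) := by
  refine sum_image fun τ₁ h₁ τ₂ h₂ heq => ?_
  rw [← union_sdiff_cancel_right (mem_link_iff.1 (hA h₁)).1,
    ← union_sdiff_cancel_right (mem_link_iff.1 (hA h₂)).1]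
  exact congrArg (· \ σ) heq

theorem statement_4_general (d : ℕ) (X : Finset (Finset ℕ))
    (σ : Finset ℕ) (k : ℕ) (hk : (k : ℤ) ≤ (d : ℤ) - (σ.card : ℤ))
    (A : Finset (Finset ℕ)) (hA : A ⊆ facesC (link X σ) (k + 1)) :
    normC X d (liftF σ A) =
      ((σ.card + k + 1).choose (k + 1) : ℝ) * weightC X d σ *
        normC (link X σ) (d - σ.card) A := by
  rw [normC_liftF d (hA.trans (filter_subset _ _)), normC, mul_sum]
  exact sum_congr rfl fun τ hτ => weightC_union_link X d k σ τ (by omega) (hA hτ)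

/-- `‖I^σ(A)‖ = binom(|σ|+k+1, k+1) · w(σ) · ‖A‖_σ` for a
`k`-cochain `A` of the link `X_σ`, `0 ≤ k ≤ d - |σ|`. -/
theorem statement_4 (d : ℕ) (X : Finset (Finset ℕ)) (hX : IsComplex X d)
    (σ : Finset ℕ) (hσ : σ ∈ X) (k : ℕ) (hk : (k : ℤ) ≤ (d : ℤ) - (σ.card : ℤ))
    (A : Finset (Finset ℕ)) (hA : A ⊆ facesC (link X σ) (k + 1)) :
    normC X d (liftF σ A) =
      ((σ.card + k + 1).choose (k + 1) : ℝ) * weightC X d σ *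
        normC (link X σ) (d - σ.card) A :=
  statement_4_general d X σ k hk A hA

end HDExpansion
end
end

section
/- Let X be a d-complex, 0 ≤ k ≤ d, and let A ⊆ X(k) be a minimal k-cochain. Then A is locally minimal, i.e. for every nonempty face σ ∈ X, the localization I_σ(A) is a minimal cochain of the link X_σ. -/
open Finset
open scoped symmDiff

noncomputable section

namespace HDExpansion

/-!
Removing `σ` identifies the cochains of `X` supported on faces containing `σ` with the cochains
of the link `X_σ`. Under this identification weights are proportional, with a positive factor
depending only on the dimension, and lifting commutes with the coboundary. Hence every
coboundary `b` of the link lifts to a coboundary of `X` that only touches faces containing `σ`,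
and minimality of `A` against that lift is, after cancelling the common part of `A` away from
`σ`, minimality of `I_σ(A)` against `b`. When `|σ| > k` the localization consists of faces of
cardinality `0`, which no coboundary contains.
-/

section

variable {X B : Finset (Finset ℕ)} {σ τ F : Finset ℕ} {d j m : ℕ}

lemma facesC_subset : facesC X m ⊆ X := filter_subset _ _

lemma mem_facesC : τ ∈ facesC X m ↔ τ ∈ X ∧ τ.card = m := mem_filter

lemma weightC_nonneg (X : Finset (Finset ℕ)) (d : ℕ) (σ : Finset ℕ) : 0 ≤ weightC X d σ :=
  div_nonneg (by positivity) (by positivity)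

lemma normC_mono {A : Finset (Finset ℕ)} (h : A ⊆ B) : normC X d A ≤ normC X d B :=
  sum_le_sum_of_subset_of_nonneg h fun σ _ _ => weightC_nonneg X d σ

lemma mem_locF : τ ∈ locF σ B ↔ Disjoint τ σ ∧ τ ∪ σ ∈ B := by
  simp only [locF, mem_image, mem_filter]
  constructor
  · rintro ⟨ρ, ⟨hρ, hσρ⟩, rfl⟩
    exact ⟨disjoint_sdiff_self_left, by rwa [sdiff_union_of_subset hσρ]⟩
  · rintro ⟨hτσ, hτB⟩
    exact ⟨τ ∪ σ, ⟨hτB, subset_union_right⟩, union_sdiff_cancel_right hτσ⟩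

lemma mem_link : τ ∈ link X σ ↔ Disjoint τ σ ∧ τ ∪ σ ∈ X := mem_locF

lemma disjoint_of_mem_link (h : τ ∈ link X σ) : Disjoint τ σ := (mem_link.mp h).1

lemma union_mem_facesC_iff (h : Disjoint τ σ) :
    τ ∪ σ ∈ facesC X (j + σ.card) ↔ τ ∈ facesC (link X σ) j := by
  simp only [mem_facesC, mem_link, card_union_of_disjoint h, h, true_and,
    Nat.add_right_cancel_iff]

lemma sdiff_mem_facesC_link_iff (h : σ ⊆ F) :
    F \ σ ∈ facesC (link X σ) j ↔ F ∈ facesC X (j + σ.card) := by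
  rw [← union_mem_facesC_iff disjoint_sdiff_self_left, sdiff_union_of_subset h]

lemma locF_subset_facesC_link (hB : B ⊆ facesC X m) :
    locF σ B ⊆ facesC (link X σ) (m - σ.card) := by
  intro τ hτ
  obtain ⟨hτσ, hτB⟩ := mem_locF.mp hτ
  have hm : m - σ.card + σ.card = m := by
    have := (mem_facesC.mp (hB hτB)).2
    rw [card_union_of_disjoint hτσ] at this
    omega
  rw [← union_mem_facesC_iff hτσ, hm]
  exact hB hτB

lemma locF_symmDiff (P Q : Finset (Finset ℕ)) : locF σ (P ∆ Q) = locF σ P ∆ locF σ Q := by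
  ext τ
  simp only [mem_symmDiff, mem_locF]
  tauto

lemma injOn_union_right : Set.InjOn (· ∪ σ) {τ | Disjoint τ σ} := fun x hx y hy hxy => by
  simpa only [union_sdiff_cancel_right hx, union_sdiff_cancel_right hy] using
    congrArg (· \ σ) hxy

lemma subset_of_mem_liftF (h : τ ∈ liftF σ B) : σ ⊆ τ := by
  obtain ⟨ρ, -, rfl⟩ := mem_image.mp h
  exact subset_union_right

lemma mem_liftF (hB : ∀ ρ ∈ B, Disjoint ρ σ) : τ ∈ liftF σ B ↔ σ ⊆ τ ∧ τ \ σ ∈ B := by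
  refine ⟨fun h => ⟨subset_of_mem_liftF h, ?_⟩, fun ⟨hστ, hτB⟩ => ?_⟩
  · obtain ⟨ρ, hρ, rfl⟩ := mem_image.mp h
    rwa [union_sdiff_cancel_right (hB ρ hρ)]
  · exact mem_image.mpr ⟨τ \ σ, hτB, sdiff_union_of_subset hστ⟩

lemma locF_liftF (hB : ∀ ρ ∈ B, Disjoint ρ σ) : locF σ (liftF σ B) = B := by
  ext τ
  rw [mem_locF, mem_liftF hB]
  constructor
  · rintro ⟨hτσ, -, hτB⟩
    rwa [union_sdiff_cancel_right hτσ] at hτB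
  · intro hτB
    exact ⟨hB τ hτB, subset_union_right, by rwa [union_sdiff_cancel_right (hB τ hτB)]⟩

lemma filter_not_superset_symmDiff_liftF (A : Finset (Finset ℕ)) :
    (A ∆ liftF σ B).filter (fun ρ => ¬ σ ⊆ ρ) = A.filter fun ρ => ¬ σ ⊆ ρ := by
  ext τ
  have := fun h : τ ∈ liftF σ B => subset_of_mem_liftF h
  simp only [mem_filter, mem_symmDiff]
  tauto

lemma liftF_subset_facesC (hB : B ⊆ facesC (link X σ) j) :
    liftF σ B ⊆ facesC X (j + σ.card) := by
  intro τ hτ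
  obtain ⟨ρ, hρ, rfl⟩ := mem_image.mp hτ
  exact (union_mem_facesC_iff (disjoint_of_mem_link (facesC_subset (hB hρ)))).mpr (hB hρ)

lemma cobC_liftF (hB : B ⊆ link X σ) :
    cobC X (j + σ.card) (liftF σ B) = liftF σ (cobC (link X σ) j B) := by
  have hcob : ∀ ρ ∈ cobC (link X σ) j B, Disjoint ρ σ := fun ρ hρ =>
    disjoint_of_mem_link (facesC_subset (mem_filter.mp hρ).1)
  ext τ
  rw [mem_liftF hcob]
  by_cases hστ : σ ⊆ τ
  · have hfilter : (liftF σ B).filter (· ⊆ τ) = (B.filter (· ⊆ τ \ σ)).image (· ∪ σ) := by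
      rw [liftF, filter_image]
      refine congrArg _ (filter_congr fun ρ hρ => ?_)
      rw [union_subset_iff, subset_sdiff]
      simp [hστ, disjoint_of_mem_link (hB hρ)]
    have hinj : Set.InjOn (· ∪ σ) (B.filter (· ⊆ τ \ σ) : Set (Finset ℕ)) :=
      injOn_union_right.mono fun ρ hρ => disjoint_of_mem_link (hB (mem_filter.mp hρ).1)
    simp only [cobC, mem_filter, hfilter, card_image_of_injOn hinj, hστ, true_and]
    rw [sdiff_mem_facesC_link_iff hστ, add_right_comm]
  · have hempty : (liftF σ B).filter (· ⊆ τ) = ∅ :=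
      filter_eq_empty_iff.mpr fun ρ hρ hρτ => hστ ((subset_of_mem_liftF hρ).trans hρτ)
    simp [cobC, hempty, hστ]

lemma IsCobound.subset_facesC (h : IsCobound X m B) : B ⊆ facesC X (m - 1 + 1) := by
  obtain ⟨γ, -, rfl⟩ := h
  exact filter_subset _ _

lemma isCobound_liftF (hm : 1 ≤ m) (h : IsCobound (link X σ) m B) :
    IsCobound X (m + σ.card) (liftF σ B) := by
  obtain ⟨γ, hγ, rfl⟩ := h
  have hm' : m + σ.card - 1 = m - 1 + σ.card := by omega
  refine ⟨liftF σ γ, hm' ▸ liftF_subset_facesC hγ, ?_⟩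
  rw [hm', cobC_liftF (hγ.trans facesC_subset)]

lemma card_filter_superset_facesC_link (hσd : σ.card ≤ d) (hτ : Disjoint τ σ) :
    ((facesC X (d + 1)).filter fun F => τ ∪ σ ⊆ F).card =
      ((facesC (link X σ) (d - σ.card + 1)).filter fun F => τ ⊆ F).card := by
  have hd : d - σ.card + 1 + σ.card = d + 1 := by omega
  refine card_bij' (fun F _ => F \ σ) (fun F _ => F ∪ σ) (fun F hF => ?_) (fun F hF => ?_)
    (fun F hF => ?_) (fun F hF => ?_)
  · obtain ⟨hF, hτσF⟩ := mem_filter.mp hF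
    obtain ⟨hτF, hσF⟩ := union_subset_iff.mp hτσF
    exact mem_filter.mpr ⟨(sdiff_mem_facesC_link_iff hσF).mpr (hd ▸ hF),
      subset_sdiff.mpr ⟨hτF, hτ⟩⟩
  · obtain ⟨hF, hτF⟩ := mem_filter.mp hF
    exact mem_filter.mpr ⟨hd ▸ (union_mem_facesC_iff (disjoint_of_mem_link
      (facesC_subset hF))).mpr hF, union_subset_union hτF subset_rfl⟩
  · exact sdiff_union_of_subset (union_subset_iff.mp (mem_filter.mp hF).2).2
  · exact union_sdiff_cancel_right (disjoint_of_mem_link (facesC_subset (mem_filter.mp hF).1))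

lemma exists_pos_weightC_union_eq_mul (hX : IsComplex X d) (hσ : σ ∈ X) (hσd : σ.card ≤ d)
    (hj : j + σ.card ≤ d + 1) :
    ∃ c > 0, ∀ τ ∈ facesC (link X σ) j,
      weightC X d (τ ∪ σ) = c * weightC (link X σ) (d - σ.card) τ := by
  obtain ⟨⟨ρ, hρ⟩, -, hpure⟩ := hX
  obtain ⟨F₀, hF₀, -, hF₀card⟩ := hpure ρ hρ
  obtain ⟨F, hF, hσF, hFcard⟩ := hpure σ hσ
  have hXtop : 0 < (facesC X (d + 1)).card := card_pos.mpr ⟨F₀, mem_facesC.mpr ⟨hF₀, hF₀card⟩⟩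
  have hYtop : 0 < (facesC (link X σ) (d - σ.card + 1)).card :=
    card_pos.mpr ⟨F \ σ, (sdiff_mem_facesC_link_iff hσF).mpr
      (mem_facesC.mpr ⟨hF, by omega⟩)⟩
  have ha : 0 < (d - σ.card + 1).choose j := Nat.choose_pos (by omega)
  have hb : 0 < (d + 1).choose (j + σ.card) := Nat.choose_pos hj
  refine ⟨((d - σ.card + 1).choose j * (facesC (link X σ) (d - σ.card + 1)).card : ℝ) /
    ((d + 1).choose (j + σ.card) * (facesC X (d + 1)).card), by positivity, fun τ hτ => ?_⟩
  have hτσ := disjoint_of_mem_link (facesC_subset hτ)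
  rw [weightC, weightC, card_union_of_disjoint hτσ, (mem_facesC.mp hτ).2,
    card_filter_superset_facesC_link hσd hτσ]
  push_cast
  field_simp

lemma normC_eq_mul_normC_locF_add {A : Finset (Finset ℕ)} {c : ℝ}
    (hw : ∀ τ ∈ facesC (link X σ) j,
      weightC X d (τ ∪ σ) = c * weightC (link X σ) (d - σ.card) τ)
    (hA : A ⊆ facesC X (j + σ.card)) :
    normC X d A = c * normC (link X σ) (d - σ.card) (locF σ A) +
      normC X d (A.filter fun ρ => ¬ σ ⊆ ρ) := by
  have hinj : Set.InjOn (· \ σ) (A.filter (σ ⊆ ·) : Set (Finset ℕ)) := fun x hx y hy hxy => by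
    rw [← sdiff_union_of_subset (mem_filter.mp hx).2, ← sdiff_union_of_subset (mem_filter.mp hy).2]
    exact congrArg (· ∪ σ) hxy
  rw [normC, normC, normC, ← sum_filter_add_sum_filter_not A (σ ⊆ ·), locF, sum_image hinj,
    mul_sum]
  refine congrArg (· + _) (sum_congr rfl fun ρ hρ => ?_)
  obtain ⟨hρA, hσρ⟩ := mem_filter.mp hρ
  rw [← hw _ ((sdiff_mem_facesC_link_iff hσρ).mpr (hA hρA)), sdiff_union_of_subset hσρ]

theorem isMinimal_locF {A : Finset (Finset ℕ)} (hX : IsComplex X d) (hσ : σ ∈ X) (hj : 1 ≤ j)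
    (hjd : j + σ.card ≤ d + 1) (hA : A ⊆ facesC X (j + σ.card))
    (hmin : IsMinimal X d (j + σ.card) A) :
    IsMinimal (link X σ) (d - σ.card) j (locF σ A) := by
  obtain ⟨c, hc, hw⟩ := exists_pos_weightC_union_eq_mul hX hσ (by omega) hjd
  intro b hb
  have hbY : b ⊆ facesC (link X σ) j := Nat.sub_add_cancel hj ▸ hb.subset_facesC
  have hbσ : ∀ ρ ∈ b, Disjoint ρ σ := fun ρ hρ => disjoint_of_mem_link (facesC_subset (hbY hρ))
  have hAb : A ∆ liftF σ b ⊆ facesC X (j + σ.card) :=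
    symmDiff_subset_union.trans (union_subset hA (liftF_subset_facesC hbY))
  have key := hmin _ (isCobound_liftF hj hb)
  rw [normC_eq_mul_normC_locF_add hw hA, normC_eq_mul_normC_locF_add hw hAb, locF_symmDiff,
    locF_liftF hbσ, filter_not_superset_symmDiff_liftF] at key
  exact le_of_mul_le_mul_left (by linarith) hc

theorem isMinimal_of_subset_facesC_zero {dY : ℕ} {A : Finset (Finset ℕ)} (hA : A ⊆ facesC X 0) :
    IsMinimal X dY 0 A := by
  intro b hb
  refine normC_mono fun τ hτ => mem_symmDiff.mpr (Or.inl ⟨hτ, fun hτb => ?_⟩)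
  have h0 := (mem_facesC.mp (hA hτ)).2
  have h1 := (mem_facesC.mp (hb.subset_facesC hτb)).2
  omega

end

/-- A minimal cochain is locally minimal. -/
theorem statement_8 (d k : ℕ) (hk : k ≤ d) (X : Finset (Finset ℕ)) (hX : IsComplex X d)
    (A : Finset (Finset ℕ)) (hA : A ⊆ facesC X (k + 1))
    (hmin : IsMinimal X d (k + 1) A) :
    IsLocallyMinimal X d (k + 1) A := by
  intro σ hσ _
  by_cases hσk : σ.card ≤ k
  · obtain ⟨j, hj⟩ : ∃ j, k + 1 = j + 1 + σ.card := ⟨k - σ.card, by omega⟩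
    rw [hj] at hA hmin ⊢
    rw [Nat.add_sub_cancel]
    exact isMinimal_locF hX hσ (Nat.le_add_left 1 j) (by omega) hA hmin
  · have h0 : k + 1 - σ.card = 0 := by omega
    exact h0 ▸ isMinimal_of_subset_facesC_zero (h0 ▸ locF_subset_facesC_link hA)

end HDExpansion
end
end

section
/- Let X be a d-complex, −1 ≤ i ≤ k ≤ d−1, A ⊆ X(k) and 0 < η < 1. Let σ ∈ S_η^i(A), t ∈ L_η(A,σ), t' ∈ A, and p ∈ X(k+1) with t ⊆ p and t' ⊆ p. Then either t' ∩ σ is a fat face and t' ∈ L_η(A, t' ∩ σ), or p ∈ Υ_η(A). -/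
open Finset
open scoped symmDiff

noncomputable section

namespace HDExpansion

open scoped Classical in
/-- `fatD X d kc η A j` is the set of fat faces `S_η^{k-j}(A)` where `kc = k+1`
is the cardinality of the faces of `A` (downward induction on `j`). -/
def fatD (X : Finset (Finset ℕ)) (d kc : ℕ) (η : ℝ) (A : Finset (Finset ℕ)) :
    ℕ → Finset (Finset ℕ)
  | 0 => A
  | j + 1 =>
    (facesC X (kc - (j + 1))).filter fun σ =>
      η ^ 2 ^ j ≤ normC (link X σ) (d - σ.card) (locF σ (fatD X d kc η A j))

/-- The fat faces `S_η^i(A)` of dimension `i` (with `-1 ≤ i ≤ k`), for a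
`k`-dimensional cochain `A` of the `d`-complex `X`. -/
def fatS (X : Finset (Finset ℕ)) (d k : ℕ) (η : ℝ) (A : Finset (Finset ℕ)) (i : ℤ) :
    Finset (Finset ℕ) :=
  fatD X d (k + 1) η A ((k : ℤ) - i).toNat

open scoped Classical in
/-- The fat ladders `L_η(A,σ)` sitting on a fat `i`-face `σ`. -/
def ladderL (X : Finset (Finset ℕ)) (d k : ℕ) (η : ℝ) (A : Finset (Finset ℕ))
    (i : ℤ) (σ : Finset ℕ) : Finset (Finset ℕ) :=
  A.filter fun t => ∃ c : ℤ → Finset ℕ, c i = σ ∧ c (k : ℤ) = t ∧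
    (∀ j : ℤ, i ≤ j → j ≤ (k : ℤ) → c j ∈ fatS X d k η A j) ∧
    (∀ j : ℤ, i ≤ j → j < (k : ℤ) → c j ⊆ c (j + 1))

/-- The `i`-fat-ladders `L_η(A,i) = ⋃_{σ ∈ S_η^i(A)} L_η(A,σ)`. -/
def ladderAll (X : Finset (Finset ℕ)) (d k : ℕ) (η : ℝ) (A : Finset (Finset ℕ))
    (i : ℤ) : Finset (Finset ℕ) :=
  (fatS X d k η A i).biUnion fun σ => ladderL X d k η A i σ

open scoped Classical in
/-- The degenerate faces `Υ_η(A)`: the `(k+1)`-dimensional faces containing a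
dead-end, i.e. two equal-dimensional fat faces whose intersection is a
codimension-1 non-fat face. -/
def UpsilonF (X : Finset (Finset ℕ)) (d k : ℕ) (η : ℝ) (A : Finset (Finset ℕ)) :
    Finset (Finset ℕ) :=
  (facesC X (k + 2)).filter fun p => ∃ i : ℤ, 0 ≤ i ∧ i ≤ (k : ℤ) ∧
    ∃ σ ∈ fatS X d k η A i, ∃ σ' ∈ fatS X d k η A i,
      σ ⊆ p ∧ σ' ⊆ p ∧ σ'.card = σ.card ∧ (σ ∩ σ').card + 1 = σ.card ∧
      σ ∩ σ' ∉ fatS X d k η A (i - 1)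


lemma fatS_top (X : Finset (Finset ℕ)) (d k : ℕ) (η : ℝ) (A : Finset (Finset ℕ)) :
    fatS X d k η A (k : ℤ) = A := by
  unfold fatS
  rw [sub_self, Int.toNat_zero]
  rfl

lemma fatS_card {X : Finset (Finset ℕ)} {d k : ℕ} {η : ℝ} {A : Finset (Finset ℕ)}
    (hA : A ⊆ facesC X (k + 1)) {i : ℤ} (hi : -1 ≤ i) (hik : i ≤ (k : ℤ))
    {τ : Finset ℕ} (hτ : τ ∈ fatS X d k η A i) : (τ.card : ℤ) = i + 1 := by
  unfold fatS at hτ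
  rcases Nat.eq_zero_or_pos ((k : ℤ) - i).toNat with h0 | hpos
  · have hik' : i = (k : ℤ) := by omega
    rw [h0] at hτ
    have hc := hA hτ
    simp only [facesC, Finset.mem_filter] at hc
    omega
  · obtain ⟨m, hm⟩ := Nat.exists_eq_succ_of_ne_zero (Nat.pos_iff_ne_zero.mp hpos)
    rw [hm] at hτ
    simp only [fatD, facesC, Finset.mem_filter] at hτ
    have hm' : (k : ℤ) - i = (m : ℤ) + 1 := by omega
    have hcard := hτ.1.2
    omega

lemma no_deadend {X : Finset (Finset ℕ)} {d k : ℕ} {η : ℝ} {A : Finset (Finset ℕ)}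
    {p : Finset ℕ} (hp : p ∈ facesC X (k + 2)) (hpΥ : p ∉ UpsilonF X d k η A)
    {l : ℤ} (h0 : 0 ≤ l) (hl : l ≤ (k : ℤ)) {τ τ' : Finset ℕ}
    (hτ : τ ∈ fatS X d k η A l) (hτ' : τ' ∈ fatS X d k η A l)
    (hτp : τ ⊆ p) (hτ'p : τ' ⊆ p) (hcard : τ'.card = τ.card)
    (hint : (τ ∩ τ').card + 1 = τ.card) :
    τ ∩ τ' ∈ fatS X d k η A (l - 1) := by
  by_contra h
  exact hpΥ (by
    simp only [UpsilonF, Finset.mem_filter]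
    exact ⟨hp, l, h0, hl, τ, hτ, τ', hτ', hτp, hτ'p, hcard, hint, h⟩)

/-- The fat ladder lemma: inside a `(k+1)`-face which
contains a fat ladder and a face of `A`, one either descends to a deeper
ladder or the ambient face is degenerate. -/
theorem statement_12 (d k : ℕ) (hk : k + 1 ≤ d) (X : Finset (Finset ℕ))
    (hX : IsComplex X d)
    (A : Finset (Finset ℕ)) (hA : A ⊆ facesC X (k + 1))
    (η : ℝ) (hη0 : 0 < η) (hη1 : η < 1)
    (i : ℤ) (hi : -1 ≤ i) (hik : i ≤ (k : ℤ))
    (σ : Finset ℕ) (hσ : σ ∈ fatS X d k η A i)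
    (t : Finset ℕ) (ht : t ∈ ladderL X d k η A i σ)
    (t' : Finset ℕ) (ht' : t' ∈ A)
    (p : Finset ℕ) (hp : p ∈ facesC X (k + 2)) (htp : t ⊆ p) (ht'p : t' ⊆ p) :
    (t' ∩ σ ∈ fatS X d k η A (((t' ∩ σ).card : ℤ) - 1) ∧
      t' ∈ ladderL X d k η A (((t' ∩ σ).card : ℤ) - 1) (t' ∩ σ)) ∨
    p ∈ UpsilonF X d k η A := by
  classical
  have hpc : p.card = k + 2 := by
    simpa [facesC] using (Finset.mem_filter.mp hp).2
  have ht2 := ht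
  simp only [ladderL, Finset.mem_filter] at ht2
  obtain ⟨htA, c, hci, hck, hcfat, hcmono⟩ := ht2
  have htc : t.card = k + 1 := by
    simpa [facesC] using (Finset.mem_filter.mp (hA htA)).2
  have ht'c : t'.card = k + 1 := by
    simpa [facesC] using (Finset.mem_filter.mp (hA ht')).2
  have hσc : (σ.card : ℤ) = i + 1 := fatS_card hA hi hik hσ
  -- chain monotonicity (transitive closure)
  have hmono2 : ∀ n : ℕ, ∀ j : ℤ, i ≤ j → j + n ≤ (k : ℤ) → c j ⊆ c (j + n) := by
    intro n
    induction n with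
    | zero => intro j _ _; simpa using subset_rfl
    | succ n ih =>
      intro j hij hjk
      have h1 : c j ⊆ c (j + n) := ih j hij (by push_cast at hjk ⊢; omega)
      have h2 : c (j + n) ⊆ c (j + n + 1) :=
        hcmono (j + n) (by push_cast at hjk ⊢; omega) (by push_cast at hjk ⊢; omega)
      have hc : (((n + 1 : ℕ)) : ℤ) = (n : ℤ) + 1 := by push_cast; ring
      rw [hc, ← add_assoc]
      exact h1.trans h2
  have hmono' : ∀ j : ℤ, i ≤ j → ∀ j' : ℤ, j ≤ j' → j' ≤ (k : ℤ) → c j ⊆ c j' := by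
    intro j hij j' h1 h2
    have h3 := hmono2 (j' - j).toNat j hij (by omega)
    rwa [show j + (((j' - j).toNat : ℕ) : ℤ) = j' from by omega] at h3
  have hσt : σ ⊆ t := by
    rw [← hci, ← hck]; exact hmono' i le_rfl (k : ℤ) hik le_rfl
  by_cases htt : t = t'
  · -- trivial case
    left
    have hts : t' ∩ σ = σ := Finset.inter_eq_right.mpr (htt ▸ hσt)
    rw [hts]
    have hidx : (σ.card : ℤ) - 1 = i := by omega
    rw [hidx]
    exact ⟨hσ, htt ▸ ht⟩
  -- main case: t ≠ t'
  have h1 : (t \ t').card = 1 := by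
    have hsub : t ∪ t' ⊆ p := Finset.union_subset htp ht'p
    have hle : (t ∪ t').card ≤ k + 2 := hpc ▸ Finset.card_le_card hsub
    have h2 : (t \ t').card + t'.card = (t ∪ t').card := Finset.card_sdiff_add_card t t'
    have hne : t \ t' ≠ ∅ := by
      intro h0
      exact htt (Finset.eq_of_subset_of_card_le
        (Finset.sdiff_eq_empty_iff_subset.mp h0) (by omega))
    have hpos : 0 < (t \ t').card := Finset.card_pos.mpr (Finset.nonempty_iff_ne_empty.mpr hne)
    omega
  obtain ⟨y, hy⟩ := Finset.card_eq_one.mp h1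
  have hyt : y ∈ t := by
    have : y ∈ t \ t' := hy ▸ Finset.mem_singleton_self y
    exact (Finset.mem_sdiff.mp this).1
  have hyt' : y ∉ t' := by
    have : y ∈ t \ t' := hy ▸ Finset.mem_singleton_self y
    exact (Finset.mem_sdiff.mp this).2
  have htt' : ∀ z, z ∈ t → z ≠ y → z ∈ t' := by
    intro z hz hzy
    by_contra hz'
    have : z ∈ t \ t' := Finset.mem_sdiff.mpr ⟨hz, hz'⟩
    rw [hy, Finset.mem_singleton] at this
    exact hzy this
  set i' : ℤ := ((t' ∩ σ).card : ℤ) - 1 with hi'def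
  -- characterization of t' ∩ σ
  have hchar : (y ∈ σ ∧ i' = i - 1 ∧ t' ∩ σ = σ \ {y}) ∨
      (y ∉ σ ∧ i' = i ∧ t' ∩ σ = σ) := by
    by_cases hyσ : y ∈ σ
    · left
      have hset : t' ∩ σ = σ \ {y} := by
        ext z
        simp only [Finset.mem_inter, Finset.mem_sdiff, Finset.mem_singleton]
        constructor
        · rintro ⟨hz1, hz2⟩
          exact ⟨hz2, fun h => hyt' (h ▸ hz1)⟩
        · rintro ⟨hz1, hz2⟩
          exact ⟨htt' z (hσt hz1) hz2, hz1⟩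
      have hcs : (σ \ {y}).card = σ.card - 1 := by
        rw [Finset.card_sdiff_of_subset (Finset.singleton_subset_iff.mpr hyσ), Finset.card_singleton]
      have hpos : 1 ≤ σ.card := Finset.one_le_card.mpr ⟨y, hyσ⟩
      refine ⟨hyσ, ?_, hset⟩
      rw [hi'def, hset]
      omega
    · right
      have hset : t' ∩ σ = σ := Finset.inter_eq_right.mpr
        (fun z hz => htt' z (hσt hz) (fun h => hyσ (h ▸ hz)))
      refine ⟨hyσ, ?_, hset⟩
      rw [hi'def, hset]
      omega
  have hi'lb : i - 1 ≤ i' ∧ i' ≤ i := by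
    rcases hchar with ⟨_, h, _⟩ | ⟨_, h, _⟩ <;> omega
  by_cases hpΥ : p ∈ UpsilonF X d k η A
  · right; exact hpΥ
  left
  -- the shifted chain
  set c' : ℤ → Finset ℕ :=
    fun j => if j = (k : ℤ) then t' else if y ∈ c (j + 1) then c (j + 1) \ {y} else c j
    with hc'def
  have hc'k : c' (k : ℤ) = t' := by rw [hc'def]; simp
  have hc'eq : ∀ j : ℤ, i' ≤ j → j < (k : ℤ) →
      (y ∈ c (j + 1) ∧ c' j = c (j + 1) \ {y}) ∨
      (y ∉ c (j + 1) ∧ i ≤ j ∧ c' j = c j) := by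
    intro j hj hjk
    have hne : j ≠ (k : ℤ) := by omega
    by_cases hyc : y ∈ c (j + 1)
    · left
      refine ⟨hyc, ?_⟩
      rw [hc'def]
      simp [hne, hyc]
    · right
      have hij : i ≤ j := by
        by_contra hij
        have hji : j = i - 1 := by omega
        rcases hchar with ⟨hyσ, hie, _⟩ | ⟨hyσ, hie, _⟩
        · apply hyc
          have : j + 1 = i := by omega
          rw [this, hci]; exact hyσ
        · omega
      refine ⟨hyc, hij, ?_⟩
      rw [hc'def]
      simp [hne, hyc]
  -- c' j is contained in p
  have hctp : ∀ j : ℤ, i ≤ j → j ≤ (k : ℤ) → c j ⊆ p := by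
    intro j h1 h2
    exact (hck ▸ hmono' j h1 (k : ℤ) h2 le_rfl).trans htp
  have hc'p : ∀ j : ℤ, i' ≤ j → j ≤ (k : ℤ) → c' j ⊆ p := by
    intro j h1 h2
    by_cases hjk : j = (k : ℤ)
    · rw [hjk, hc'k]; exact ht'p
    · rcases hc'eq j h1 (by omega) with ⟨hy1, he⟩ | ⟨hy1, hij, he⟩
      · rw [he]
        exact (Finset.sdiff_subset).trans (hctp (j + 1) (by omega) (by omega))
      · rw [he]; exact hctp j hij (by omega)
  -- cards of chain faces
  have hcard_c : ∀ j : ℤ, i ≤ j → j ≤ (k : ℤ) → ((c j).card : ℤ) = j + 1 := by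
    intro j h1 h2
    exact fatS_card hA (by omega) h2 (hcfat j h1 h2)
  -- downward induction: every c' j is fat
  have key : ∀ n : ℕ, ∀ j : ℤ, i' ≤ j → j + n = (k : ℤ) → c' j ∈ fatS X d k η A j := by
    intro n
    induction n with
    | zero =>
      intro j hj hjk
      have : j = (k : ℤ) := by omega
      rw [this, hc'k, fatS_top]
      exact ht'
    | succ n ih =>
      intro j hj hjk
      have hjk' : j < (k : ℤ) := by omega
      have ihj1 : c' (j + 1) ∈ fatS X d k η A (j + 1) := ih (j + 1) (by omega) (by omega)
      rcases hc'eq j hj hjk' with ⟨hy1, he⟩ | ⟨hy1, hij, he⟩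
      · -- dead-end route
        have hj1i : i ≤ j + 1 := by omega
        have hcj1 : c (j + 1) ∈ fatS X d k η A (j + 1) := hcfat (j + 1) hj1i (by omega)
        have hid : c (j + 1) ∩ c' (j + 1) = c (j + 1) \ {y} := by
          by_cases hjk2 : j + 1 = (k : ℤ)
          · have hckt : c (j + 1) = t := by rw [hjk2, hck]
            rw [hckt, hjk2, hc'k]
            ext z
            simp only [Finset.mem_inter, Finset.mem_sdiff, Finset.mem_singleton]
            constructor
            · rintro ⟨hz1, hz2⟩
              exact ⟨hz1, fun h => hyt' (h ▸ hz2)⟩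
            · rintro ⟨hz1, hz2⟩
              exact ⟨hz1, htt' z hz1 hz2⟩
          · rcases hc'eq (j + 1) (by omega) (by omega) with ⟨hy2, he2⟩ | ⟨hy2, _, he2⟩
            · rw [he2]
              have hsub : c (j + 1) ⊆ c (j + 1 + 1) := hcmono (j + 1) hj1i (by omega)
              ext z
              simp only [Finset.mem_inter, Finset.mem_sdiff, Finset.mem_singleton]
              constructor
              · rintro ⟨hz1, _, hz3⟩
                exact ⟨hz1, hz3⟩
              · rintro ⟨hz1, hz2⟩
                exact ⟨hz1, hsub hz1, hz2⟩
            · exact absurd (hcmono (j + 1) hj1i (by omega) hy1) hy2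
        have hcc : ((c (j + 1)).card : ℤ) = j + 2 := by
          have := hcard_c (j + 1) hj1i (by omega); omega
        have hcc' : ((c' (j + 1)).card : ℤ) = j + 2 := by
          have := fatS_card hA (by omega) (by omega) ihj1; omega
        have hintc : (c (j + 1) ∩ c' (j + 1)).card + 1 = (c (j + 1)).card := by
          rw [hid]
          have : (c (j + 1) \ {y}).card = (c (j + 1)).card - 1 := by
            rw [Finset.card_sdiff_of_subset (Finset.singleton_subset_iff.mpr hy1), Finset.card_singleton]
          have hpos : 1 ≤ (c (j + 1)).card := Finset.one_le_card.mpr ⟨y, hy1⟩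
          omega
        have hde := no_deadend hp hpΥ (show (0:ℤ) ≤ j + 1 by omega) (by omega)
          hcj1 ihj1 (hctp (j + 1) hj1i (by omega)) (hc'p (j + 1) (by omega) (by omega))
          (by omega) hintc
        rw [hid] at hde
        rw [show j + (1:ℤ) - 1 = j from by ring] at hde
        rw [he]
        exact hde
      · rw [he]
        exact hcfat j hij (by omega)
  have hfat_all : ∀ j : ℤ, i' ≤ j → j ≤ (k : ℤ) → c' j ∈ fatS X d k η A j := by
    intro j h1 h2
    exact key ((k : ℤ) - j).toNat j h1 (by omega)
  -- i' < k
  have hi'k : i' < (k : ℤ) := by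
    rcases hchar with ⟨hyσ, hie, _⟩ | ⟨hyσ, hie, _⟩
    · omega
    · by_contra hcon
      have hik2 : i = (k : ℤ) := by omega
      have hσt2 : σ = t := Finset.eq_of_subset_of_card_le hσt (by omega)
      exact hyσ (hσt2 ▸ hyt)
  -- fatness of the base
  have hbase : t' ∩ σ ∈ fatS X d k η A i' := by
    rcases hchar with ⟨hyσ, hie, hset⟩ | ⟨hyσ, hie, hset⟩
    · have hik3 : i - 1 < (k : ℤ) := by omega
      have hc'i : c' (i - 1) = σ \ {y} := by
        rcases hc'eq (i - 1) (by omega) hik3 with ⟨hy1, he⟩ | ⟨hy1, _, he⟩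
        · rw [he, show i - 1 + (1:ℤ) = i from by ring, hci]
        · exact absurd (by rw [show i - 1 + (1:ℤ) = i from by ring, hci]; exact hyσ) hy1
      rw [hset, hie, ← hc'i]
      exact hfat_all (i - 1) (by omega) (by omega)
    · rw [hset, hie]
      exact hσ
  -- monotonicity of c'
  have hmono'' : ∀ j : ℤ, i' ≤ j → j < (k : ℤ) → c' j ⊆ c' (j + 1) := by
    intro j hj hjk
    rcases hc'eq j hj hjk with ⟨hy1, he⟩ | ⟨hy1, hij, he⟩ <;> rw [he]
    · by_cases h2 : j + 1 = (k : ℤ)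
      · rw [h2, hc'k, hck]
        intro z hz
        rw [Finset.mem_sdiff, Finset.mem_singleton] at hz
        exact htt' z hz.1 hz.2
      · rcases hc'eq (j + 1) (by omega) (by omega) with ⟨hy2, he2⟩ | ⟨hy2, _, he2⟩
        · rw [he2]
          exact Finset.sdiff_subset_sdiff (hcmono (j + 1) (by omega) (by omega)) subset_rfl
        · exact absurd (hcmono (j + 1) (by omega) (by omega) hy1) hy2
    · have hyj : y ∉ c j := fun h => hy1 (hcmono j hij hjk h)
      by_cases h2 : j + 1 = (k : ℤ)
      · rw [h2, hc'k]
        intro z hz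
        exact htt' z (by rw [← hck, ← h2]; exact hcmono j hij hjk hz)
          (fun h => hyj (h ▸ hz))
      · rcases hc'eq (j + 1) (by omega) (by omega) with ⟨hy2, he2⟩ | ⟨hy2, _, he2⟩
        · rw [he2]
          intro z hz
          rw [Finset.mem_sdiff, Finset.mem_singleton]
          exact ⟨(hcmono j hij hjk).trans (hcmono (j + 1) (by omega) (by omega)) hz,
            fun h => hyj (h ▸ hz)⟩
        · rw [he2]
          exact hcmono j hij hjk
  -- the base is contained in the next step
  have hstep0 : t' ∩ σ ⊆ c' (i' + 1) := by
    rcases hchar with ⟨hyσ, hie, hset⟩ | ⟨hyσ, hie, hset⟩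
    · rw [hset, hie, show i - 1 + (1:ℤ) = i from by ring]
      by_cases h2 : i = (k : ℤ)
      · rw [h2, hc'k]
        intro z hz
        rw [Finset.mem_sdiff, Finset.mem_singleton] at hz
        exact htt' z (hσt hz.1) hz.2
      · rcases hc'eq i (by omega) (by omega) with ⟨hy1, he⟩ | ⟨hy1, _, he⟩
        · rw [he]
          have hsub : σ ⊆ c (i + 1) := by rw [← hci]; exact hcmono i le_rfl (by omega)
          exact Finset.sdiff_subset_sdiff hsub subset_rfl
        · exact absurd (by rw [← hci] at hyσ; exact hcmono i le_rfl (by omega) hyσ) hy1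
    · rw [hset, hie]
      by_cases h2 : i + 1 = (k : ℤ)
      · rw [h2, hc'k]
        intro z hz
        exact htt' z (hσt hz) (fun h => hyσ (h ▸ hz))
      · rcases hc'eq (i + 1) (by omega) (by omega) with ⟨hy1, he⟩ | ⟨hy1, _, he⟩
        · rw [he]
          intro z hz
          rw [Finset.mem_sdiff, Finset.mem_singleton]
          have hsub : σ ⊆ c (i + 1 + 1) := by
            rw [← hci]; exact hmono' i le_rfl (i + 1 + 1) (by omega) (by omega)
          exact ⟨hsub hz, fun h => hyσ (h ▸ hz)⟩
        · rw [he]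
          have hsub : σ ⊆ c (i + 1) := by rw [← hci]; exact hcmono i le_rfl (by omega)
          exact hsub
  refine ⟨hbase, ?_⟩
  -- build the ladder for t'
  simp only [ladderL, Finset.mem_filter]
  refine ⟨ht', fun j => if j ≤ i' then t' ∩ σ else c' j, by simp, ?_, ?_, ?_⟩
  · show (if (k : ℤ) ≤ i' then t' ∩ σ else c' (k : ℤ)) = t'
    rw [if_neg (by omega), hc'k]
  · intro j h1 h2
    show (if j ≤ i' then t' ∩ σ else c' j) ∈ fatS X d k η A j
    by_cases hj : j ≤ i'
    · have hji : j = i' := le_antisymm hj h1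
      rw [if_pos hj, hji]
      exact hbase
    · rw [if_neg hj]
      exact hfat_all j (by omega) h2
  · intro j h1 h2
    show (if j ≤ i' then t' ∩ σ else c' j) ⊆ (if j + 1 ≤ i' then t' ∩ σ else c' (j + 1))
    by_cases hj : j ≤ i'
    · have hji : j = i' := le_antisymm hj h1
      rw [if_pos hj, if_neg (by omega), hji]
      exact hstep0
    · rw [if_neg hj, if_neg (by omega)]
      exact hmono'' j (by omega) h2

end HDExpansion
end
end
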